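/- Let H be a linear n-uniform hypergraph with n edges. If H is weakly dense, i.e., for every integer k with 2 ≤ k < √n there are at most k² vertices of degree k, then H admits a proper n-coloring, and its chromatic number is exactly n. -/

import Mathlib

/-!
Colour the conflict graph (vertices are adjacent when they share an edge) greedily, in order of
decreasing degree; the core is the set of vertices of degree at least 2. Linearity bounds the
number of earlier neighbours of a vertex `v` of degree `k`: the other edges through the neighbours
of `v` avoid `v` and meet each edge at `v` at most once, so `∑ (deg u - 1) ≤ k (n - k)` over the
neighbours, which settles `k² > n`; for `k² < n` weak density bounds the neighbours of degree
exactly `k`; for `k² = n` each of the `k` edges at `v` holds at most `k` further vertices of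
degree `≥ k`. In the extremal ("saturated") case every core neighbour of `v` has degree `k`, and
`v` is coloured before a neighbour that is closer to an unsaturated vertex. The vertices whose
whole core component is saturated number `k (k + 1)`, each missing exactly `k - 1` of the others,
so `k` disjoint non-adjacent pairs colour them with `k² = n` colours. An edge is an `n`-clique.
-/

open scoped Classical

/-- A finite hypergraph is given by its finite set of edges, each a finite set of vertices.
`Linear E` means any two distinct edges share at most one vertex. -/
def HG.Linear {V : Type*} (E : Finset (Finset V)) : Prop :=
  ∀ e₁ ∈ E, ∀ e₂ ∈ E, e₁ ≠ e₂ → (e₁ ∩ e₂).card ≤ 1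

/-- The degree of a vertex: the number of edges containing it. -/
noncomputable def HG.deg {V : Type*} (E : Finset (Finset V)) (v : V) : ℕ :=
  (E.filter (fun e => v ∈ e)).card

/-- The vertex set of the hypergraph: the union of its edges. -/
noncomputable def HG.verts {V : Type*} (E : Finset (Finset V)) : Finset V := E.sup id

/-- The adjacency of a vertex `v`: vertices distinct from `v` sharing an edge with `v`. -/
noncomputable def HG.adj {V : Type*} (E : Finset (Finset V)) (v : V) : Finset V :=
  (HG.verts E).filter (fun u => u ≠ v ∧ ∃ e ∈ E, v ∈ e ∧ u ∈ e)

/-- A proper coloring: vertices lying in a common edge receive distinct colors. -/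
def HG.Proper {V : Type*} {m : ℕ} (E : Finset (Finset V)) (f : V → Fin m) : Prop :=
  ∀ e ∈ E, ∀ u ∈ e, ∀ w ∈ e, u ≠ w → f u ≠ f w

open Finset

theorem Nat.mul_self_sub_one_eq {k : ℕ} (hk : 1 ≤ k) :
    k * k - 1 = (k + 1) * (k - 1) := by
  obtain ⟨j, rfl⟩ : ∃ j, k = j + 1 := ⟨k - 1, by omega⟩
  simp only [Nat.add_sub_cancel]
  ring_nf
  omega

namespace SimpleGraph

variable {V : Type*} (G : SimpleGraph V)

def ColorsOn (s : Finset V) (c : ℕ) (f : V → ℕ) : Prop :=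
  (∀ v ∈ s, f v < c) ∧ ∀ u ∈ s, ∀ w ∈ s, G.Adj u w → f u ≠ f w

theorem colorsOn_empty (c : ℕ) (f : V → ℕ) : G.ColorsOn ∅ c f :=
  ⟨by simp, by simp⟩

variable {G}

/-- Greedy colouring, in order of decreasing `key`. -/
theorem ColorsOn.exists_union {α : Type*} [LinearOrder α] {t : Finset V}
    {c : ℕ} {f : V → ℕ} (hf : G.ColorsOn t c f) (key : V → α) (s : Finset V)
    (hs : ∀ v ∈ s, #((t ∪ s.filter (fun u => key v ≤ key u)).filter (G.Adj v)) < c) :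
    ∃ g, G.ColorsOn (t ∪ s) c g := by
  induction s using Finset.induction_on_min_value key with
  | empty => exact ⟨f, by simpa using hf⟩
  | insert a s ha hmin ih =>
    obtain ⟨g, hg_lt, hg_ne⟩ := ih fun v hv => (card_le_card (filter_subset_filter _
      (union_subset_union_right (filter_subset_filter _ (subset_insert a s))))).trans_lt
        (hs v (mem_insert_of_mem hv))
    have hN : #(((t ∪ s).filter (G.Adj a)).image g) < #(range c) := by
      refine card_image_le.trans_lt ((card_le_card (filter_subset_filter _
        (union_subset_union_right fun x hx => ?_))).trans_lt
          ((hs a (mem_insert_self a s)).trans_eq (card_range c).symm))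
      exact mem_filter.mpr ⟨mem_insert_of_mem hx, hmin x hx⟩
    obtain ⟨col, hcol, hfree⟩ := exists_mem_notMem_of_card_lt_card hN
    have hold : ∀ v ∈ t ∪ insert a s, v ≠ a → v ∈ t ∪ s := by
      intro v; simp only [mem_union, mem_insert]; tauto
    have hnew : ∀ w ∈ t ∪ insert a s, G.Adj a w → col ≠ g w := by
      rintro w hw hadj rfl
      exact hfree (mem_image_of_mem g (mem_filter.mpr ⟨hold w hw hadj.ne.symm, hadj⟩))
    refine ⟨Function.update g a col, fun v hv => ?_, fun u hu w hw hadj => ?_⟩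
    · rcases eq_or_ne v a with rfl | hva
      · simpa using hcol
      · rw [Function.update_of_ne hva]
        exact hg_lt v (hold v hv hva)
    · rcases eq_or_ne u a with rfl | hua
      · rw [Function.update_self, Function.update_of_ne hadj.ne.symm]
        exact hnew w hw hadj
      rcases eq_or_ne w a with rfl | hwa
      · rw [Function.update_self, Function.update_of_ne hua]
        exact (hnew u hu hadj.symm).symm
      rw [Function.update_of_ne hua, Function.update_of_ne hwa]
      exact hg_ne u (hold u hu hua) w (hold w hw hwa) hadj

theorem exists_colorsOn_card (s : Finset V) : ∃ f, G.ColorsOn s #s f := by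
  obtain ⟨f, hf⟩ := (G.colorsOn_empty #s fun _ => 0).exists_union (fun _ => ()) s fun v hv => by
    refine (card_le_card fun u hu => ?_).trans_lt (card_erase_lt_of_mem hv)
    simp only [empty_union, mem_filter] at hu
    exact mem_erase.mpr ⟨hu.2.ne.symm, hu.1.1⟩
  exact ⟨f, by simpa using hf⟩

variable {X : Finset V} {m : ℕ}

theorem exists_not_adj_of_card_sdiff_lt (hm : 0 < m)
    (hX : ∀ u ∈ X, #(X.filter fun w => w ≠ u ∧ ¬G.Adj u w) = m) {Y : Finset V}
    (hYX : Y ⊆ X) (hY : #(X \ Y) < #Y) : ∃ u ∈ Y, ∃ w ∈ Y, u ≠ w ∧ ¬G.Adj u w := by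
  by_contra! hclique
  have hcount := sum_card_bipartiteAbove_eq_sum_card_bipartiteBelow
    (s := Y) (t := X \ Y) (r := fun u w => ¬G.Adj u w)
  have hleft : ∀ u ∈ Y, #((X \ Y).bipartiteAbove (fun u w => ¬G.Adj u w) u) = m := by
    intro u hu
    rw [← hX u (hYX hu)]
    congr 1
    ext w
    simp only [bipartiteAbove, mem_filter, mem_sdiff]
    exact ⟨fun h => ⟨h.1.1, fun hwu => h.1.2 (hwu ▸ hu), h.2⟩,
      fun h => ⟨⟨h.1, fun hwY => h.2.2 (hclique u hu w hwY h.2.1.symm)⟩, h.2.2⟩⟩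
  have hright : ∀ w ∈ X \ Y, #(Y.bipartiteBelow (fun u w => ¬G.Adj u w) w) ≤ m := by
    intro w hw
    rw [← hX w (mem_sdiff.mp hw).1]
    refine card_le_card fun u hu => ?_
    simp only [bipartiteBelow, mem_filter] at hu ⊢
    exact ⟨hYX hu.1, fun huw => (mem_sdiff.mp hw).2 (huw ▸ hu.1), fun h => hu.2 h.symm⟩
  rw [sum_congr rfl hleft, sum_const, smul_eq_mul] at hcount
  have hle := hcount.le.trans (sum_le_sum hright)
  rw [sum_const, smul_eq_mul] at hle
  exact absurd (Nat.le_of_mul_le_mul_right hle hm) (not_le.mpr hY)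

/-- Pairs of non-adjacent vertices share a colour; `4 * j ≤ #X + 3` guarantees that `j` disjoint
such pairs can be found one after the other. -/
theorem exists_colorsOn_card_sub (hm : 0 < m)
    (hX : ∀ u ∈ X, #(X.filter fun w => w ≠ u ∧ ¬G.Adj u w) = m) (j : ℕ) {Y : Finset V}
    (hYX : Y ⊆ X) (hj : #(X \ Y) + 4 * j ≤ #Y + 3) : ∃ f, G.ColorsOn Y (#Y - j) f := by
  induction j generalizing Y with
  | zero => simpa using exists_colorsOn_card Y
  | succ j ih =>
    obtain ⟨u, hu, w, hw, huw, hnadj⟩ := exists_not_adj_of_card_sdiff_lt hm hX hYX (by omega)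
    set Y' := (Y.erase u).erase w
    have hmem : ∀ x, x ∈ Y' ↔ x ∈ Y ∧ x ≠ u ∧ x ≠ w := fun x => by
      simp only [Y', mem_erase]; tauto
    have hY'Y : Y' ⊆ Y := (erase_subset _ _).trans (erase_subset _ _)
    have hcard : #Y' + 2 = #Y := by
      rw [card_erase_of_mem (mem_erase.mpr ⟨huw.symm, hw⟩), card_erase_of_mem hu]
      have := card_pos.mpr ⟨u, hu⟩
      have := card_le_card (show {u, w} ⊆ Y from insert_subset hu (singleton_subset_iff.mpr hw))
      rw [card_pair huw] at this
      omega
    have hsdiff : #(X \ Y') = #(X \ Y) + 2 := by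
      rw [card_sdiff_of_subset (hY'Y.trans hYX), card_sdiff_of_subset hYX]
      have := card_le_card hYX
      omega
    obtain ⟨f, hf_lt, hf_ne⟩ := ih (hY'Y.trans hYX) (by omega)
    refine ⟨fun x => if x = u ∨ x = w then #Y' - j else f x, fun v hv => ?_,
      fun a ha b hb hab => ?_⟩
    · dsimp only
      split_ifs with h
      · omega
      · exact (hf_lt v ((hmem v).mpr ⟨hv, not_or.mp h⟩)).trans_le (by omega)
    · have hpair : ¬((a = u ∨ a = w) ∧ (b = u ∨ b = w)) := by
        rintro ⟨rfl | rfl, rfl | rfl⟩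
        exacts [hab.ne rfl, hnadj hab, hnadj hab.symm, hab.ne rfl]
      have hold : ∀ x ∈ Y, ¬(x = u ∨ x = w) → x ∈ Y' := fun x hx h =>
        (hmem x).mpr ⟨hx, not_or.mp h⟩
      dsimp only
      split_ifs with h₁ h₂ h₂
      · exact absurd ⟨h₁, h₂⟩ hpair
      · exact (hf_lt b (hold b hb h₂)).ne'
      · exact (hf_lt a (hold a ha h₁)).ne
      · exact hf_ne a (hold a ha h₁) b (hold b hb h₂) hab

end SimpleGraph

namespace HG

variable {V : Type*} {E : Finset (Finset V)} {n : ℕ} {u v : V} {e : Finset V}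

def conflictGraph (E : Finset (Finset V)) : SimpleGraph V where
  Adj u w := u ≠ w ∧ ∃ e ∈ E, u ∈ e ∧ w ∈ e
  symm := ⟨fun _ _ ⟨h, e, he, hu, hw⟩ => ⟨h.symm, e, he, hw, hu⟩⟩
  loopless := ⟨fun _ h => h.1 rfl⟩

theorem proper_iff {m : ℕ} {f : V → Fin m} :
    Proper E f ↔ ∀ u w, (conflictGraph E).Adj u w → f u ≠ f w :=
  ⟨fun hf _ _ ⟨huw, e, he, hu, hw⟩ => hf e he _ hu _ hw huw,
    fun hf e he _ hu _ hw huw => hf _ _ ⟨huw, e, he, hu, hw⟩⟩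

theorem mem_verts : v ∈ verts E ↔ ∃ e ∈ E, v ∈ e := by
  simp [verts, Finset.mem_sup]

theorem mem_verts_iff_deg_pos : v ∈ verts E ↔ 0 < deg E v := by
  simp [mem_verts, deg, card_pos, Finset.Nonempty]

theorem mem_adj : u ∈ adj E v ↔ (conflictGraph E).Adj v u := by
  simp only [adj, mem_filter, conflictGraph, mem_verts]
  exact ⟨fun ⟨_, h, e, he, hv, hu⟩ => ⟨Ne.symm h, e, he, hv, hu⟩,
    fun ⟨h, e, he, hv, hu⟩ => ⟨⟨e, he, hu⟩, Ne.symm h, e, he, hv, hu⟩⟩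

theorem deg_le (hE : E.card = n) (v : V) : deg E v ≤ n :=
  hE ▸ card_filter_le _ _

theorem card_adj_le (huniform : ∀ e ∈ E, e.card = n) (v : V) :
    #(adj E v) ≤ deg E v * (n - 1) := by
  calc #(adj E v) ≤ #((E.filter (v ∈ ·)).biUnion fun e => e.erase v) := by
        refine card_le_card fun u hu => ?_
        obtain ⟨huv, e, he, hv, hu⟩ := mem_adj.mp hu
        exact mem_biUnion.mpr ⟨e, mem_filter.mpr ⟨he, hv⟩, mem_erase.mpr ⟨huv.symm, hu⟩⟩
    _ ≤ ∑ e ∈ E.filter (v ∈ ·), #(e.erase v) := card_biUnion_le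
    _ = deg E v * (n - 1) := by
        rw [sum_congr rfl fun e he => by
          rw [card_erase_of_mem (mem_filter.mp he).2, huniform e (mem_filter.mp he).1],
          sum_const, smul_eq_mul]
        rfl

theorem Linear.card_filter_mem_mem (hlin : Linear E) (h : (conflictGraph E).Adj v u) :
    #(E.filter fun f => v ∈ f ∧ u ∈ f) = 1 := by
  obtain ⟨hvu, e, he, hv, hu⟩ := h
  refine card_eq_one.mpr
    ⟨e, eq_singleton_iff_unique_mem.mpr ⟨mem_filter.mpr ⟨he, hv, hu⟩, ?_⟩⟩
  intro f hf
  obtain ⟨hf, hvf, huf⟩ := mem_filter.mp hf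
  by_contra hfe
  have h2 : ({v, u} : Finset V) ⊆ f ∩ e := by
    simp [insert_subset_iff, hv, hu, hvf, huf]
  exact absurd ((card_pair hvu).symm.trans_le ((card_le_card h2).trans (hlin f hf e he hfe)))
    (by norm_num)

/-- The other edges through the neighbours of `v` avoid `v`, and each of them meets the
`deg E v` edges through `v` at most once. -/
theorem Linear.sum_adj_deg_sub_one_le (hlin : Linear E) (hE : E.card = n) (v : V) :
    ∑ u ∈ adj E v, (deg E u - 1) ≤ deg E v * (n - deg E v) := by
  set F := E.filter (v ∉ ·)
  have hdeg : ∀ u ∈ adj E v, deg E u - 1 = #(F.bipartiteAbove (· ∈ ·) u) := by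
    intro u hu
    have h1 := hlin.card_filter_mem_mem (mem_adj.mp hu)
    have h2 := card_filter_add_card_filter_not (s := E.filter (u ∈ ·)) (p := (v ∈ ·))
    simp only [filter_filter] at h2
    simp only [bipartiteAbove, F, filter_filter, deg]
    rw [← h2, filter_congr fun f _ => and_comm (a := u ∈ f) (b := v ∈ f), h1]
    simp only [and_comm]
    omega
  have hF : ∀ f ∈ F, #((adj E v).bipartiteBelow (· ∈ ·) f) ≤ deg E v := by
    intro f hf
    obtain ⟨hf, hvf⟩ := mem_filter.mp hf
    calc #((adj E v).bipartiteBelow (· ∈ ·) f)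
        ≤ #((E.filter (v ∈ ·)).biUnion (· ∩ f)) := by
          refine card_le_card fun u hu => ?_
          obtain ⟨hu, huf⟩ := mem_filter.mp hu
          obtain ⟨-, e, he, hv, hue⟩ := mem_adj.mp hu
          exact mem_biUnion.mpr ⟨e, mem_filter.mpr ⟨he, hv⟩, mem_inter.mpr ⟨hue, huf⟩⟩
      _ ≤ ∑ e ∈ E.filter (v ∈ ·), #(e ∩ f) := card_biUnion_le
      _ ≤ ∑ e ∈ E.filter (v ∈ ·), 1 := sum_le_sum fun e he =>
          hlin e (mem_filter.mp he).1 f hf fun hef => hvf (hef ▸ (mem_filter.mp he).2)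
      _ = deg E v := by rw [sum_const, smul_eq_mul, mul_one]; rfl
  have hcardF : #F = n - deg E v := by
    rw [show F = E \ E.filter (v ∈ ·) from filter_not _ _,
      card_sdiff_of_subset (filter_subset _ _), hE]
    rfl
  calc ∑ u ∈ adj E v, (deg E u - 1) = ∑ u ∈ adj E v, #(F.bipartiteAbove (· ∈ ·) u) :=
        sum_congr rfl hdeg
    _ = ∑ f ∈ F, #((adj E v).bipartiteBelow (· ∈ ·) f) :=
        sum_card_bipartiteAbove_eq_sum_card_bipartiteBelow _
    _ ≤ ∑ f ∈ F, deg E v := sum_le_sum hF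
    _ = deg E v * (n - deg E v) := by rw [sum_const, smul_eq_mul, hcardF, mul_comm]

theorem Linear.sum_deg_sub_one_le (hlin : Linear E) (hE : E.card = n) (he : e ∈ E) :
    ∑ u ∈ e, (deg E u - 1) ≤ n - 1 := by
  have hdeg : ∀ u ∈ e, deg E u - 1 = #((E.erase e).bipartiteAbove (· ∈ ·) u) := by
    intro u hu
    rw [bipartiteAbove, filter_erase, card_erase_of_mem (mem_filter.mpr ⟨he, hu⟩)]
    rfl
  calc ∑ u ∈ e, (deg E u - 1) = ∑ u ∈ e, #((E.erase e).bipartiteAbove (· ∈ ·) u) :=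
        sum_congr rfl hdeg
    _ = ∑ f ∈ E.erase e, #(e.bipartiteBelow (· ∈ ·) f) :=
        sum_card_bipartiteAbove_eq_sum_card_bipartiteBelow _
    _ ≤ ∑ f ∈ E.erase e, 1 := sum_le_sum fun f hf => by
        rw [bipartiteBelow, filter_mem_eq_inter]
        exact hlin e he f (mem_of_mem_erase hf) (ne_of_mem_erase hf).symm
    _ = n - 1 := by rw [sum_const, smul_eq_mul, mul_one, card_erase_of_mem he, hE]

noncomputable def upAdj (E : Finset (Finset V)) (v : V) : Finset V :=
  (adj E v).filter fun u => deg E v ≤ deg E u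

theorem upAdj_subset_biUnion :
    upAdj E v ⊆ (E.filter (v ∈ ·)).biUnion
      fun e => (e.filter fun u => deg E v ≤ deg E u).erase v := by
  intro u hu
  obtain ⟨hu, hdeg⟩ := mem_filter.mp hu
  obtain ⟨huv, e, he, hv, hue⟩ := mem_adj.mp hu
  exact mem_biUnion.mpr ⟨e, mem_filter.mpr ⟨he, hv⟩,
    mem_erase.mpr ⟨huv.symm, mem_filter.mpr ⟨hue, hdeg⟩⟩⟩

theorem Linear.card_filter_deg_ge_le (hlin : Linear E) (hE : E.card = n) (he : e ∈ E) {k : ℕ}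
    (hk : 2 ≤ k) (hkn : k * k = n) : #(e.filter fun u => k ≤ deg E u) ≤ k + 1 := by
  have hlow : #(e.filter fun u => k ≤ deg E u) * (k - 1) ≤ n - 1 := by
    refine (card_nsmul_le_sum _ _ _ fun u hu => ?_).trans
      ((sum_le_sum_of_subset (filter_subset _ _)).trans (hlin.sum_deg_sub_one_le hE he))
    have := (mem_filter.mp hu).2
    omega
  rw [← hkn, Nat.mul_self_sub_one_eq (by omega)] at hlow
  exact Nat.le_of_mul_le_mul_right hlow (by omega)

theorem Linear.card_filter_erase_le (hlin : Linear E) (hE : E.card = n) (he : e ∈ E)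
    (hv : v ∈ e) (hk : 2 ≤ deg E v) (hkn : deg E v * deg E v = n) :
    #((e.filter fun u => deg E v ≤ deg E u).erase v) ≤ deg E v := by
  rw [card_erase_of_mem (mem_filter.mpr ⟨hv, le_refl (deg E v)⟩)]
  have := hlin.card_filter_deg_ge_le hE he hk hkn
  omega

theorem Linear.card_upAdj_le (hlin : Linear E) (hE : E.card = n) (hk : 2 ≤ deg E v)
    (hkn : deg E v * deg E v = n) : #(upAdj E v) ≤ n :=
  calc #(upAdj E v)
      ≤ ∑ e ∈ E.filter (v ∈ ·), #((e.filter fun u => deg E v ≤ deg E u).erase v) :=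
        (card_le_card upAdj_subset_biUnion).trans card_biUnion_le
    _ ≤ ∑ e ∈ E.filter (v ∈ ·), deg E v := sum_le_sum fun e he =>
        hlin.card_filter_erase_le hE (mem_filter.mp he).1 (mem_filter.mp he).2 hk hkn
    _ = n := by rw [sum_const, smul_eq_mul]; exact hkn

/-- A vertex of degree `k = √n` whose upper neighbourhood attains the bound of `card_upAdj_le`. -/
def Saturated (n : ℕ) (E : Finset (Finset V)) (v : V) : Prop :=
  2 ≤ deg E v ∧ deg E v * deg E v = n ∧ #(upAdj E v) = n

theorem Saturated.card_filter_edge (hlin : Linear E) (hE : E.card = n) (hsat : Saturated n E v)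
    (he : e ∈ E) (hv : v ∈ e) : #(e.filter fun u => deg E v ≤ deg E u) = deg E v + 1 := by
  obtain ⟨hk, hkn, hcard⟩ := hsat
  have hle := fun f (hf : f ∈ E.filter (v ∈ ·)) =>
    hlin.card_filter_erase_le hE (mem_filter.mp hf).1 (mem_filter.mp hf).2 hk hkn
  have hsum : ∑ f ∈ E.filter (v ∈ ·), #((f.filter fun u => deg E v ≤ deg E u).erase v)
      = ∑ f ∈ E.filter (v ∈ ·), deg E v := by
    refine le_antisymm (sum_le_sum hle) ?_
    rw [sum_const, smul_eq_mul]
    exact (hkn.trans hcard.symm).le.trans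
      ((card_le_card upAdj_subset_biUnion).trans card_biUnion_le)
  have hvS : v ∈ e.filter fun u => deg E v ≤ deg E u := mem_filter.mpr ⟨hv, le_rfl⟩
  have h := (sum_eq_sum_iff_of_le hle).mp hsum e (mem_filter.mpr ⟨he, hv⟩)
  rw [card_erase_of_mem hvS] at h
  have := card_pos.mpr ⟨v, hvS⟩
  omega

/-- The `deg E v + 1` vertices of degree at least `k = deg E v` in an edge through `v` already
exhaust the edge budget `n - 1 = (k + 1) (k - 1)`. -/
theorem Saturated.deg_eq_of_mem (hlin : Linear E) (hE : E.card = n) (hsat : Saturated n E v)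
    (he : e ∈ E) (hv : v ∈ e) (hu : u ∈ e) (hu2 : 2 ≤ deg E u) : deg E u = deg E v := by
  set k := deg E v
  set S := e.filter fun w => k ≤ deg E w
  have hS : #S = k + 1 := hsat.card_filter_edge hlin hE he hv
  have hbudget := hlin.sum_deg_sub_one_le hE he
  have hn : n - 1 = (k + 1) * (k - 1) := by
    rw [← hsat.2.1, Nat.mul_self_sub_one_eq (by have := hsat.1; omega)]
  have hlow : ∑ w ∈ S, (k - 1) = (k + 1) * (k - 1) := by rw [sum_const, smul_eq_mul, hS]
  rcases lt_trichotomy (deg E u) k with hlt | heq | hgt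
  · have huS : u ∉ S := fun h => absurd (mem_filter.mp h).2 (not_le.mpr hlt)
    have hins := sum_le_sum_of_subset (f := fun w => deg E w - 1)
      (insert_subset hu (filter_subset _ e) : insert u S ⊆ e)
    rw [sum_insert huS] at hins
    have := sum_le_sum fun w (hw : w ∈ S) => show k - 1 ≤ deg E w - 1 by
      have := (mem_filter.mp hw).2; omega
    omega
  · exact heq
  · have hlt := sum_lt_sum (s := S) (f := fun _ => k - 1) (g := fun w => deg E w - 1)
      (fun w hw => by have := (mem_filter.mp hw).2; omega)
      ⟨u, mem_filter.mpr ⟨hu, hgt.le⟩, by omega⟩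
    have : ∑ w ∈ S, (deg E w - 1) ≤ ∑ w ∈ e, (deg E w - 1) :=
      sum_le_sum_of_subset (filter_subset _ e)
    rw [hlow] at hlt
    omega

def WeaklyDense (n : ℕ) (E : Finset (Finset V)) : Prop :=
  ∀ k, 2 ≤ k → k * k < n → #((verts E).filter fun v => deg E v = k) ≤ k * k

theorem card_upAdj_lt_of_deg_eq_one (huniform : ∀ e ∈ E, e.card = n) (hv : deg E v = 1) :
    #(upAdj E v) < n := by
  obtain ⟨e, he, hve⟩ := mem_verts.mp (mem_verts_iff_deg_pos.mpr (hv ▸ one_pos))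
  have hn : 0 < n := huniform e he ▸ card_pos.mpr ⟨v, hve⟩
  have : #(upAdj E v) ≤ #(adj E v) := card_filter_le _ _
  have := card_adj_le huniform v
  rw [hv] at this
  omega

theorem Linear.card_upAdj_lt_of_lt_sq (hlin : Linear E) (hE : E.card = n) (hk : 2 ≤ deg E v)
    (hkn : n < deg E v * deg E v) : #(upAdj E v) < n := by
  set k := deg E v
  have hbudget : #(upAdj E v) * (k - 1) ≤ k * (n - k) := by
    refine (card_nsmul_le_sum _ _ _ fun u hu => ?_).trans
      ((sum_le_sum_of_subset (filter_subset _ _)).trans (hlin.sum_adj_deg_sub_one_le hE v))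
    have := (mem_filter.mp hu).2
    omega
  obtain ⟨d, hd⟩ : ∃ d, n = k + d := ⟨n - k, by have := deg_le hE v; omega⟩
  obtain ⟨j, hj⟩ : ∃ j, k = j + 1 := ⟨k - 1, by omega⟩
  rw [hd, Nat.add_sub_cancel_left, hj, Nat.add_sub_cancel] at hbudget
  by_contra! hc
  rw [hd, hj] at hc hkn
  nlinarith

theorem Linear.card_upAdj_lt_of_sq_lt (hlin : Linear E) (hE : E.card = n) (hwd : WeaklyDense n E)
    (hk : 2 ≤ deg E v) (hkn : deg E v * deg E v < n) : #(upAdj E v) < n := by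
  set k := deg E v
  set U := upAdj E v
  have hbudget : k * #U ≤ k * (n - k) + #(U.filter fun u => deg E u = k) := by
    have := sum_le_sum fun u (hu : u ∈ U) =>
      show k ≤ (deg E u - 1) + if deg E u = k then 1 else 0 by
        have := (mem_filter.mp hu).2
        split_ifs <;> omega
    rw [sum_const, smul_eq_mul, sum_add_distrib, ← card_filter (fun u => deg E u = k) U] at this
    have : ∑ u ∈ U, (deg E u - 1) ≤ k * (n - k) :=
      (sum_le_sum_of_subset (filter_subset _ _)).trans (hlin.sum_adj_deg_sub_one_le hE v)
    rw [mul_comm]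
    omega
  have hsame : #(U.filter fun u => deg E u = k) + 1 ≤ k * k := by
    have hvU : v ∉ U.filter fun u => deg E u = k := fun h =>
      (mem_adj.mp (mem_filter.mp (mem_filter.mp h).1).1).ne rfl
    refine (card_insert_of_notMem hvU).symm.trans_le
      ((card_le_card fun u hu => ?_).trans (hwd k hk hkn))
    rcases mem_insert.mp hu with rfl | hu
    · exact mem_filter.mpr ⟨mem_verts_iff_deg_pos.mpr (by omega), rfl⟩
    · obtain ⟨hu, hdeg⟩ := mem_filter.mp hu
      obtain ⟨-, e, he, -, hue⟩ := mem_adj.mp (mem_filter.mp hu).1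
      exact mem_filter.mpr ⟨mem_verts.mpr ⟨e, he, hue⟩, hdeg⟩
  have hkn' : k * (n - k) + k * k = k * n := by
    rw [← Nat.mul_add, Nat.sub_add_cancel (deg_le hE v)]
  exact Nat.lt_of_mul_lt_mul_left (by omega : k * #U < k * n)

theorem Linear.card_upAdj_lt_of_not_saturated (hlin : Linear E) (hE : E.card = n)
    (huniform : ∀ e ∈ E, e.card = n) (hwd : WeaklyDense n E) (hv : v ∈ verts E)
    (hsat : ¬Saturated n E v) : #(upAdj E v) < n := by
  have hpos := mem_verts_iff_deg_pos.mp hv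
  obtain hone | hk := (show deg E v = 1 ∨ 2 ≤ deg E v by omega)
  · exact card_upAdj_lt_of_deg_eq_one huniform hone
  rcases lt_trichotomy (deg E v * deg E v) n with hlt | heq | hgt
  · exact hlin.card_upAdj_lt_of_sq_lt hE hwd hk hlt
  · exact (hlin.card_upAdj_le hE hk heq).lt_of_ne fun h => hsat ⟨hk, heq, h⟩
  · exact hlin.card_upAdj_lt_of_lt_sq hE hk hgt

def coreGraph (E : Finset (Finset V)) : SimpleGraph V where
  Adj u w := (conflictGraph E).Adj u w ∧ 2 ≤ deg E u ∧ 2 ≤ deg E w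
  symm := ⟨fun _ _ ⟨h, hu, hw⟩ => ⟨h.symm, hw, hu⟩⟩
  loopless := ⟨fun _ h => h.1.ne rfl⟩

theorem Saturated.deg_eq_of_coreGraph_adj (hlin : Linear E) (hE : E.card = n)
    (hsat : Saturated n E v) (h : (coreGraph E).Adj v u) : deg E u = deg E v := by
  obtain ⟨⟨-, e, he, hv, hu⟩, -, hu2⟩ := h
  exact hsat.deg_eq_of_mem hlin hE he hv hu hu2

def Bad (n : ℕ) (E : Finset (Finset V)) (v : V) : Prop :=
  ∀ w, (coreGraph E).Reachable v w → Saturated n E w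

theorem Bad.saturated (h : Bad n E v) : Saturated n E v :=
  h v .rfl

theorem Bad.of_adj (h : Bad n E v) (hadj : (coreGraph E).Adj v u) : Bad n E u :=
  fun w hw => h w (hadj.reachable.trans hw)

/-- Length of a shortest core walk from `v` to an unsaturated vertex (`0` if there is none). -/
noncomputable def distUnsat (n : ℕ) (E : Finset (Finset V)) (v : V) : ℕ :=
  sInf {ℓ | ∃ u, ¬Saturated n E u ∧ ∃ p : (coreGraph E).Walk v u, p.length = ℓ}

theorem distUnsat_le_length (hu : ¬Saturated n E u) (p : (coreGraph E).Walk v u) :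
    distUnsat n E v ≤ p.length :=
  Nat.sInf_le ⟨u, hu, p, rfl⟩

theorem exists_adj_distUnsat_lt (hsat : Saturated n E v) (hbad : ¬Bad n E v) :
    ∃ x, (coreGraph E).Adj v x ∧ distUnsat n E x < distUnsat n E v := by
  simp only [Bad, not_forall, exists_prop] at hbad
  obtain ⟨w, ⟨p⟩, hw⟩ := hbad
  have hne :
    {ℓ | ∃ u, ¬Saturated n E u ∧ ∃ p : (coreGraph E).Walk v u, p.length = ℓ}.Nonempty :=
    ⟨p.length, w, hw, p, rfl⟩
  obtain ⟨u, hu, q, hq⟩ := Nat.sInf_mem hne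
  cases q with
  | nil => exact absurd hsat hu
  | cons hadj q =>
    refine ⟨_, hadj, (distUnsat_le_length hu q).trans_lt ?_⟩
    rw [distUnsat, ← hq, SimpleGraph.Walk.length_cons]
    exact Nat.lt_succ_self _

/-- Among saturated vertices of equal degree, those farther from an unsaturated vertex come first,
so that each of them has a neighbour of the same degree that is coloured after it. -/
noncomputable def greedyKey (n : ℕ) (E : Finset (Finset V)) (v : V) : ℕ ×ₗ ℕ :=
  toLex (deg E v, distUnsat n E v)

noncomputable def badSet (n : ℕ) (E : Finset (Finset V)) : Finset V :=
  (verts E).filter (Bad n E)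

theorem badSet_subset_verts : badSet n E ⊆ verts E :=
  filter_subset _ _

theorem deg_lt_of_adj_badSet (hv : v ∉ badSet n E) (hverts : v ∈ verts E)
    (hu : u ∈ badSet n E) (hadj : (conflictGraph E).Adj v u) : deg E v < deg E u := by
  have hbad := (mem_filter.mp hu).2
  have hu2 := hbad.saturated.1
  by_contra! hle
  exact hv (mem_filter.mpr ⟨hverts, hbad.of_adj ⟨hadj.symm, hu2, hu2.trans hle⟩⟩)

theorem filter_adj_subset_upAdj (hv : v ∈ verts E \ badSet n E) :
    (badSet n E ∪ (verts E \ badSet n E).filter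
        fun u => greedyKey n E v ≤ greedyKey n E u).filter ((conflictGraph E).Adj v) ⊆
      (upAdj E v).filter fun u => greedyKey n E v ≤ greedyKey n E u := by
  obtain ⟨hverts, hv⟩ := mem_sdiff.mp hv
  intro u hu
  obtain ⟨hu, hadj⟩ := mem_filter.mp hu
  have hkey : greedyKey n E v ≤ greedyKey n E u := by
    rcases mem_union.mp hu with hu | hu
    · exact Prod.Lex.toLex_le_toLex.mpr (Or.inl (deg_lt_of_adj_badSet hv hverts hu hadj))
    · exact (mem_filter.mp hu).2
  have hdeg : deg E v ≤ deg E u := by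
    rcases Prod.Lex.toLex_le_toLex.mp hkey with h | h
    exacts [h.le, h.1.le]
  exact mem_filter.mpr ⟨mem_filter.mpr ⟨mem_adj.mpr hadj, hdeg⟩, hkey⟩

theorem Linear.card_filter_adj_lt (hlin : Linear E) (hE : E.card = n)
    (huniform : ∀ e ∈ E, e.card = n) (hwd : WeaklyDense n E) (hv : v ∈ verts E \ badSet n E) :
    #((badSet n E ∪ (verts E \ badSet n E).filter
        fun u => greedyKey n E v ≤ greedyKey n E u).filter ((conflictGraph E).Adj v)) < n := by
  refine (card_le_card (filter_adj_subset_upAdj hv)).trans_lt ?_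
  obtain ⟨hverts, hgood⟩ := mem_sdiff.mp hv
  by_cases hsat : Saturated n E v
  · obtain ⟨x, hadj, hdist⟩ :=
      exists_adj_distUnsat_lt hsat fun hbad => hgood (mem_filter.mpr ⟨hverts, hbad⟩)
    have hdeg := hsat.deg_eq_of_coreGraph_adj hlin hE hadj
    refine (card_lt_card (filter_ssubset.mpr ⟨x, ?_, ?_⟩)).trans_eq hsat.2.2
    · exact mem_filter.mpr ⟨mem_adj.mpr hadj.1, hdeg.ge⟩
    · exact not_le.mpr (Prod.Lex.toLex_lt_toLex.mpr (Or.inr ⟨hdeg, hdist⟩))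
  · exact (card_filter_le _ _).trans_lt
      (hlin.card_upAdj_lt_of_not_saturated hE huniform hwd hverts hsat)

theorem Linear.filter_adj_badSet (hlin : Linear E) (hE : E.card = n) (hv : v ∈ badSet n E) :
    (badSet n E).filter ((conflictGraph E).Adj v) = upAdj E v := by
  have hbad := (mem_filter.mp hv).2
  ext u
  simp only [mem_filter, badSet, upAdj, mem_adj]
  constructor
  · rintro ⟨⟨-, hu⟩, hadj⟩
    exact ⟨hadj, (hbad.saturated.deg_eq_of_coreGraph_adj hlin hE
      ⟨hadj, hbad.saturated.1, hu.saturated.1⟩).ge⟩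
  · rintro ⟨hadj, hdeg⟩
    obtain ⟨-, e, he, -, hue⟩ := id hadj
    exact ⟨⟨mem_verts.mpr ⟨e, he, hue⟩, hbad.of_adj ⟨hadj, hbad.saturated.1,
      hbad.saturated.1.trans hdeg⟩⟩, hadj⟩

theorem filter_badSet_mem_eq (hu : u ∈ badSet n E) (he : e ∈ E) (hue : u ∈ e) :
    (badSet n E).filter (· ∈ e) = e.filter fun w => deg E u ≤ deg E w := by
  have hbad := (mem_filter.mp hu).2
  ext w
  simp only [mem_filter, badSet]
  constructor
  · rintro ⟨⟨-, hw⟩, hwe⟩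
    exact ⟨hwe, (Nat.mul_self_inj.mp (hw.saturated.2.1.trans hbad.saturated.2.1.symm)).ge⟩
  · rintro ⟨hwe, hdeg⟩
    refine ⟨⟨mem_verts.mpr ⟨e, he, hwe⟩, ?_⟩, hwe⟩
    rcases eq_or_ne u w with rfl | huw
    · exact hbad
    · exact hbad.of_adj
        ⟨⟨huw, e, he, hue, hwe⟩, hbad.saturated.1, hbad.saturated.1.trans hdeg⟩

/-- Each bad vertex has degree `k = √n`, and each edge meets the bad set in `0` or `k + 1`
vertices, so `(k + 1) ∣ k #B` and `k #B ≤ n (k + 1)`; on the other hand `#B ≥ n + 1`. -/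
theorem Linear.card_badSet (hlin : Linear E) (hE : E.card = n) (hv : v ∈ badSet n E) :
    #(badSet n E) = deg E v * (deg E v + 1) := by
  set B := badSet n E
  set k := deg E v
  have hsat := (mem_filter.mp hv).2.saturated
  have hk := hsat.1
  have hdegB : ∀ u ∈ B, deg E u = k := fun u hu =>
    Nat.mul_self_inj.mp ((mem_filter.mp hu).2.saturated.2.1.trans hsat.2.1.symm)
  have hedge : ∀ f ∈ E, (k + 1 ∣ #(B.bipartiteBelow (· ∈ ·) f)) ∧
      #(B.bipartiteBelow (· ∈ ·) f) ≤ k + 1 := by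
    intro f hf
    rcases (B.bipartiteBelow (· ∈ ·) f).eq_empty_or_nonempty with h | ⟨u, hu⟩
    · simp [h]
    obtain ⟨hu, huf⟩ := mem_filter.mp hu
    have h : #(B.bipartiteBelow (· ∈ ·) f) = k + 1 := by
      rw [bipartiteBelow, filter_badSet_mem_eq hu hf huf, ← hdegB u hu]
      exact (mem_filter.mp hu).2.saturated.card_filter_edge hlin hE hf huf
    rw [h]
    exact ⟨dvd_rfl, le_rfl⟩
  have hcount : #B * k = ∑ f ∈ E, #(B.bipartiteBelow (· ∈ ·) f) := by
    rw [← sum_card_bipartiteAbove_eq_sum_card_bipartiteBelow, ← smul_eq_mul, ← sum_const]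
    exact sum_congr rfl fun u hu => (hdegB u hu).symm
  have hdvd : k + 1 ∣ #B := by
    refine (Nat.Coprime.dvd_of_dvd_mul_right ?_ (hcount ▸ dvd_sum fun f hf => (hedge f hf).1))
    simp
  have hupper : #B * k ≤ k * k * (k + 1) := by
    rw [hcount, hsat.2.1, ← hE, ← smul_eq_mul, ← sum_const]
    exact sum_le_sum fun f hf => (hedge f hf).2
  have hlower : k * k + 1 ≤ #B := by
    have hvN : v ∉ B.filter ((conflictGraph E).Adj v) := fun h => (mem_filter.mp h).2.ne rfl
    have := card_le_card (insert_subset hv (filter_subset ((conflictGraph E).Adj v) B))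
    rwa [card_insert_of_notMem hvN, hlin.filter_adj_badSet hE hv, hsat.2.2, ← hsat.2.1] at this
  obtain ⟨q, hq⟩ := hdvd
  rw [hq] at hupper hlower ⊢
  have hqk : q ≤ k := by nlinarith
  have hkq : k ≤ q := by nlinarith
  rw [le_antisymm hqk hkq, mul_comm]

theorem Linear.exists_colorsOn_badSet (hlin : Linear E) (hE : E.card = n) :
    ∃ f, (conflictGraph E).ColorsOn (badSet n E) n f := by
  rcases (badSet n E).eq_empty_or_nonempty with h | ⟨v, hv⟩
  · exact ⟨fun _ => 0, h ▸ SimpleGraph.colorsOn_empty _ _ _⟩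
  set B := badSet n E
  have hsat := (mem_filter.mp hv).2.saturated
  have hB := hlin.card_badSet hE hv
  have hnonadj : ∀ u ∈ B,
      #(B.filter fun w => w ≠ u ∧ ¬(conflictGraph E).Adj u w) = deg E v - 1 := by
    intro u hu
    have hsplit := card_filter_add_card_filter_not (s := B.erase u) (p := (conflictGraph E).Adj u)
    rw [filter_erase, erase_eq_of_notMem fun h => (mem_filter.mp h).2.ne rfl,
      hlin.filter_adj_badSet hE hu, (mem_filter.mp hu).2.saturated.2.2, card_erase_of_mem hu,
      hB, ← hsat.2.1, filter_erase] at hsplit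
    have hfilt : (B.filter fun w => ¬(conflictGraph E).Adj u w).erase u =
        B.filter fun w => w ≠ u ∧ ¬(conflictGraph E).Adj u w := by
      ext w
      simp only [mem_erase, mem_filter]
      tauto
    rw [hfilt, Nat.mul_succ] at hsplit
    omega
  have hk := hsat.1
  obtain ⟨f, hf⟩ := SimpleGraph.exists_colorsOn_card_sub (by omega : 0 < deg E v - 1) hnonadj
    (deg E v) (subset_refl B) (by rw [sdiff_self, bot_eq_empty, card_empty, hB]; nlinarith)
  rw [hB, Nat.mul_succ, Nat.add_sub_cancel, hsat.2.1] at hf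
  exact ⟨f, hf⟩

theorem weaklyDense_of_sqrt
    (hwd : ∀ k : ℕ, 2 ≤ k → (k : ℝ) < Real.sqrt n →
      ((verts E).filter (fun v => deg E v = k)).card ≤ k ^ 2) : WeaklyDense n E := by
  intro k hk hkn
  rw [← sq]
  refine hwd k hk ((Real.lt_sqrt (Nat.cast_nonneg k)).mpr ?_)
  exact_mod_cast (sq k).symm ▸ hkn

theorem le_of_proper (hn : 0 < n) (hE : E.card = n) (huniform : ∀ e ∈ E, e.card = n) {m : ℕ}
    {f : V → Fin m} (hf : Proper E f) : n ≤ m := by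
  obtain ⟨e, he⟩ := card_pos.mp (hE ▸ hn)
  calc n = #e := (huniform e he).symm
    _ ≤ #(univ : Finset (Fin m)) := card_le_card_of_injOn f (fun _ _ => mem_coe.mpr (mem_univ _))
        fun u hu w hw hfuw => by_contra fun huw => hf e he u hu w hw huw hfuw
    _ = m := card_fin m

theorem Linear.exists_proper (hlin : Linear E) (hn : 0 < n) (hE : E.card = n)
    (huniform : ∀ e ∈ E, e.card = n) (hwd : WeaklyDense n E) :
    ∃ f : V → Fin n, Proper E f := by
  obtain ⟨f₀, hf₀⟩ := hlin.exists_colorsOn_badSet hE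
  obtain ⟨g, hg_lt, hg_ne⟩ := hf₀.exists_union (greedyKey n E) (verts E \ badSet n E)
    fun v hv => hlin.card_filter_adj_lt hE huniform hwd hv
  rw [union_sdiff_of_subset badSet_subset_verts] at hg_lt hg_ne
  refine ⟨fun v => ⟨g v % n, Nat.mod_lt _ hn⟩, proper_iff.mpr fun u w hadj huw => ?_⟩
  obtain ⟨-, e, he, hu, hw⟩ := id hadj
  have hu := mem_verts.mpr ⟨e, he, hu⟩
  have hw := mem_verts.mpr ⟨e, he, hw⟩
  refine hg_ne u hu w hw hadj ?_
  simpa [Nat.mod_eq_of_lt (hg_lt u hu), Nat.mod_eq_of_lt (hg_lt w hw)] using congrArg Fin.val huw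

end HG

theorem stmt12_general {V : Type*} (n : ℕ) (hn : 0 < n)
    (E : Finset (Finset V)) (hlin : HG.Linear E)
    (hE : E.card = n) (huniform : ∀ e ∈ E, e.card = n)
    (hwd : ∀ k : ℕ, 2 ≤ k → (k : ℝ) < Real.sqrt n →
      ((HG.verts E).filter (fun v => HG.deg E v = k)).card ≤ k ^ 2) :
    IsLeast {m : ℕ | ∃ f : V → Fin m, HG.Proper E f} n :=
  ⟨hlin.exists_proper hn hE huniform (HG.weaklyDense_of_sqrt hwd),
    fun _ ⟨_, hf⟩ => HG.le_of_proper hn hE huniform hf⟩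

theorem stmt12 {V : Type*} [DecidableEq V] (n : ℕ) (hn : 0 < n)
    (E : Finset (Finset V)) (hlin : HG.Linear E)
    (hE : E.card = n) (huniform : ∀ e ∈ E, e.card = n)
    (hwd : ∀ k : ℕ, 2 ≤ k → (k : ℝ) < Real.sqrt n →
      ((HG.verts E).filter (fun v => HG.deg E v = k)).card ≤ k ^ 2) :
    IsLeast {m : ℕ | ∃ f : V → Fin m, HG.Proper E f} n :=
  stmt12_general n hn E hlin hE huniform hwd
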